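/- Let V be a real Hilbert space, a a continuous coercive bilinear form, u ∈ V the solution of a(u, v) = F(v) for all v ∈ V with F ∈ V*. Let W ⊆ V be closed, C* the corrector onto W, Ṽ := (1 − C*)V, and suppose u_H ∈ V satisfies the Galerkin conditions a(u_H, ṽ) = F(ṽ) for all ṽ ∈ Ṽ and u − u_H ∈ W + Ṽ (trivially true since V = Ṽ ⊕ W). If additionally u_H ∈ span of the φⱼ and the discrete problem a(u_H, (1 − C*)v_H) = F((1 − C*)v_H) holds for all v_H in the coarse space, then u − u_H ∈ W, and consequently qⱼ(u) = qⱼ(u_H) for every quantity of interest qⱼ. -/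

import Mathlib

/-!
The error `e = u - u_H` is `a`-orthogonal to `Ṽ = (1 - C)V` (Galerkin orthogonality), and so is
`C e ∈ W` because `a(W, Ṽ) = 0`. Hence `e - C e ∈ Ṽ` satisfies `a(e - C e, e - C e) = 0`, and
coercivity gives `e = C e ∈ W`.
-/

section Corrector

variable {R M : Type*} [CommRing R] [AddCommGroup M] [Module R M]
  (a : M →ₗ[R] M →ₗ[R] R) (W : Submodule R M) (C : M →ₗ[R] M)

theorem apply_sub_corrector_self_eq_zero (hCW : ∀ v, C v ∈ W)
    (hC : ∀ w ∈ W, ∀ v, a w (C v) = a w v) {e : M} (he : ∀ v, a e (v - C v) = 0) :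
    a (e - C e) (e - C e) = 0 := by
  have hCe : a (C e) (e - C e) = 0 := by
    rw [map_sub, hC _ (hCW e), sub_self]
  rw [a.map_sub₂, he, hCe, sub_zero]

end Corrector

theorem eq_zero_of_coercive_of_apply_self_eq_zero {V : Type*} [NormedAddCommGroup V]
    [Module ℝ V] (a : V →ₗ[ℝ] V →ₗ[ℝ] ℝ) {α : ℝ} (hα : 0 < α)
    (hcoer : ∀ v, α * ‖v‖ ^ 2 ≤ a v v) {v : V} (hv : a v v = 0) : v = 0 := by
  have hsq : α * ‖v‖ ^ 2 ≤ 0 := hv ▸ hcoer v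
  have hnorm : ‖v‖ ^ 2 = 0 :=
    le_antisymm (nonpos_of_mul_nonpos_right hsq hα) (sq_nonneg _)
  exact norm_eq_zero.mp (pow_eq_zero_iff two_ne_zero |>.mp hnorm)

theorem mem_of_forall_apply_sub_corrector_eq_zero {V : Type*} [NormedAddCommGroup V]
    [Module ℝ V] (a : V →ₗ[ℝ] V →ₗ[ℝ] ℝ) {α : ℝ} (hα : 0 < α)
    (hcoer : ∀ v, α * ‖v‖ ^ 2 ≤ a v v) (W : Submodule ℝ V) (C : V →ₗ[ℝ] V)
    (hCW : ∀ v, C v ∈ W) (hC : ∀ w ∈ W, ∀ v, a w (C v) = a w v) {e : V}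
    (he : ∀ v, a e (v - C v) = 0) : e ∈ W := by
  have hfix : e - C e = 0 :=
    eq_zero_of_coercive_of_apply_self_eq_zero a hα hcoer
      (apply_sub_corrector_self_eq_zero a W C hCW hC he)
  rw [sub_eq_zero.mp hfix]
  exact hCW e

theorem stmt_8_general {V : Type*} [NormedAddCommGroup V] [InnerProductSpace ℝ V]
    (N : ℕ)
    (a : V →ₗ[ℝ] V →ₗ[ℝ] ℝ) (α : ℝ) (hα : 0 < α)
    (hcoer : ∀ v : V, α * ‖v‖ ^ 2 ≤ a v v)
    (q : Fin N → (V →L[ℝ] ℝ))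
    (C : V →L[ℝ] V)
    (hCW : ∀ (v : V) (k : Fin N), q k (C v) = 0)
    (hC : ∀ v w : V, (∀ k : Fin N, q k w = 0) → a w (C v) = a w v)
    (F : V →L[ℝ] ℝ) (u u_H : V)
    (hu : ∀ v : V, a u v = F v)
    (hGal : ∀ v : V, a u_H (v - C v) = F (v - C v)) :
    (∀ k : Fin N, q k (u - u_H) = 0) ∧ (∀ k : Fin N, q k u = q k u_H) := by
  let W : Submodule ℝ V := ⨅ k, LinearMap.ker (q k : V →ₗ[ℝ] ℝ)
  have hmemW : ∀ w, w ∈ W ↔ ∀ k, q k w = 0 := by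
    simp [W, Submodule.mem_iInf]
  have horth : ∀ v, a (u - u_H) (v - C v) = 0 := by
    intro v
    rw [a.map_sub₂, hu, hGal, sub_self]
  have herr : u - u_H ∈ W :=
    mem_of_forall_apply_sub_corrector_eq_zero a hα hcoer W C
      (fun v => (hmemW _).mpr (hCW v)) (fun w hw v => hC v w ((hmemW w).mp hw)) horth
  have hq := (hmemW _).mp herr
  exact ⟨hq, fun k => sub_eq_zero.mp (by simpa only [map_sub] using hq k)⟩

/-- Preservation of quantities of interest by the ideal numerical
homogenization. If `u` solves `a(u, v) = F(v)` for all `v`, `W = ⋂ ker qⱼ`, `C` is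
the corrector onto `W`, and `u_H` satisfies the ideal discrete (Galerkin) problem
`a(u_H, (1 - C) v) = F((1 - C) v)` for all `v`, then `u - u_H ∈ W` and hence
`qⱼ(u) = qⱼ(u_H)` for every quantity of interest. -/
theorem stmt_8 {V : Type*} [NormedAddCommGroup V] [InnerProductSpace ℝ V]
    [CompleteSpace V] (N : ℕ)
    (a : V →ₗ[ℝ] V →ₗ[ℝ] ℝ) (α β : ℝ) (hα : 0 < α) (hαβ : α ≤ β)
    (hcoer : ∀ v : V, α * ‖v‖ ^ 2 ≤ a v v)
    (hbdd : ∀ v w : V, |a v w| ≤ β * ‖v‖ * ‖w‖)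
    (q : Fin N → (V →L[ℝ] ℝ)) (φ : Fin N → V)
    (hbi : ∀ k j : Fin N, q k (φ j) = if k = j then 1 else 0)
    (C : V →L[ℝ] V)
    (hCW : ∀ (v : V) (k : Fin N), q k (C v) = 0)
    (hC : ∀ v w : V, (∀ k : Fin N, q k w = 0) → a w (C v) = a w v)
    (F : V →L[ℝ] ℝ) (u u_H : V)
    (hu : ∀ v : V, a u v = F v)
    (hu_H : u_H ∈ Submodule.span ℝ (Set.range φ))
    (hGal : ∀ v : V, a u_H (v - C v) = F (v - C v)) :
    (∀ k : Fin N, q k (u - u_H) = 0) ∧ (∀ k : Fin N, q k u = q k u_H) :=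
  stmt_8_general N a α hα hcoer q C hCW hC F u u_H hu hGal
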